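/- (Theorem 2, RAC-LoRA with GD updates under the PL condition.) Let f : ℝ^{m×n} → ℝ be L-smooth and satisfy the PL condition with parameter μ > 0, let H^t be i.i.d. random orthogonal projection matrices with λ_min^H := λ_min(E[H^t]) > 0, let 0 < γ ≤ 1/L, and let W^{t+1} = W^t − γ·H^t·∇f(W^t) for t = 0, …, T−1 starting from W^0. Then E[f(W^T)] − f★ ≤ (1 − γ·μ·λ_min^H)^T·(f(W^0) − f★). -/

import Mathlib

open Matrix MeasureTheory ProbabilityTheory

attribute [local instance] Matrix.frobeniusSeminormedAddCommGroup Matrix.frobeniusNormedAddCommGroup Matrix.frobeniusNormedSpace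

/-- The product measurable structure on matrices. -/
local instance matrixMeasurableSpace {a b : ℕ} : MeasurableSpace (Matrix (Fin a) (Fin b) ℝ) :=
  inferInstanceAs (MeasurableSpace ((Fin a) → (Fin b) → ℝ))

/-- Trace (Frobenius) inner product. -/
noncomputable def tinner {p q : ℕ} (X Y : Matrix (Fin p) (Fin q) ℝ) : ℝ := (Xᵀ * Y).trace

/-- `G` is the gradient field of `f` with respect to the trace inner product. -/
def IsGradient {p q : ℕ} (f : Matrix (Fin p) (Fin q) ℝ → ℝ)
    (G : Matrix (Fin p) (Fin q) ℝ → Matrix (Fin p) (Fin q) ℝ) : Prop :=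
  Differentiable ℝ f ∧ ∀ W V : Matrix (Fin p) (Fin q) ℝ, fderiv ℝ f W V = tinner (G W) V

/-- Lipschitz continuity (constant `L`) of a gradient field, in Frobenius norm. -/
def LipschitzGrad {p q : ℕ} (L : ℝ)
    (G : Matrix (Fin p) (Fin q) ℝ → Matrix (Fin p) (Fin q) ℝ) : Prop :=
  ∀ W V : Matrix (Fin p) (Fin q) ℝ, ‖G W - G V‖ ≤ L * ‖W - V‖

/-- Smallest eigenvalue of a (symmetric) real matrix, as the infimum of its real spectrum. -/
noncomputable def lamMin {k : ℕ} (A : Matrix (Fin k) (Fin k) ℝ) : ℝ := sInf (spectrum ℝ A)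

namespace RacAux
open Pointwise
variable {p q n a b c d : ℕ}

lemma tinner_eq_sum (X Y : Matrix (Fin p) (Fin q) ℝ) :
    tinner X Y = ∑ j, ∑ i, X i j * Y i j := by
  simp [tinner, Matrix.trace, Matrix.diag, Matrix.mul_apply, Matrix.transpose_apply]

lemma norm_sq_eq (A : Matrix (Fin p) (Fin q) ℝ) : ‖A‖ ^ 2 = ∑ i, ∑ j, (A i j) ^ 2 := by
  rw [Matrix.frobenius_norm_def, ← Real.rpow_natCast _ 2, ← Real.rpow_mul (by positivity)]
  norm_num

lemma norm_eq_sqrt (A : Matrix (Fin p) (Fin q) ℝ) : ‖A‖ = Real.sqrt (∑ i, ∑ j, (A i j) ^ 2) := by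
  rw [← norm_sq_eq, Real.sqrt_sq (norm_nonneg A)]

lemma tinner_self (A : Matrix (Fin p) (Fin q) ℝ) : tinner A A = ‖A‖ ^ 2 := by
  rw [tinner_eq_sum, norm_sq_eq, Finset.sum_comm]
  simp [sq]

lemma tinner_self_nonneg (A : Matrix (Fin p) (Fin q) ℝ) : 0 ≤ tinner A A := by
  rw [tinner_self]; positivity

lemma abs_entry_le (A : Matrix (Fin p) (Fin q) ℝ) (i : Fin p) (j : Fin q) : |A i j| ≤ ‖A‖ := by
  rw [← Real.sqrt_sq_eq_abs, norm_eq_sqrt]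
  apply Real.sqrt_le_sqrt
  calc (A i j)^2 ≤ ∑ j', (A i j')^2 :=
        Finset.single_le_sum (f := fun j' => (A i j')^2) (fun _ _ => sq_nonneg _) (Finset.mem_univ j)
    _ ≤ ∑ i', ∑ j', (A i' j')^2 :=
        Finset.single_le_sum (f := fun i' => ∑ j', (A i' j')^2)
          (fun _ _ => Finset.sum_nonneg fun _ _ => sq_nonneg _) (Finset.mem_univ i)

lemma tinner_le (X Y : Matrix (Fin p) (Fin q) ℝ) : tinner X Y ≤ ‖X‖ * ‖Y‖ := by
  rw [tinner_eq_sum]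
  have h := Real.sum_mul_le_sqrt_mul_sqrt (Finset.univ : Finset (Fin q × Fin p))
      (fun ji => X ji.2 ji.1) (fun ji => Y ji.2 ji.1)
  rw [Fintype.sum_prod_type] at h
  calc ∑ j, ∑ i, X i j * Y i j ≤ _ := h
    _ = ‖X‖ * ‖Y‖ := by
        rw [norm_eq_sqrt, norm_eq_sqrt]
        congr 1 <;> rw [Fintype.sum_prod_type] <;>
          exact congrArg Real.sqrt Finset.sum_comm

-- bilinearity
lemma tinner_sub_left (X Y Z : Matrix (Fin p) (Fin q) ℝ) :
    tinner (X - Y) Z = tinner X Z - tinner Y Z := by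
  simp [tinner, Matrix.transpose_sub, Matrix.sub_mul, Matrix.trace_sub]

lemma tinner_smul_right (c : ℝ) (X Y : Matrix (Fin p) (Fin q) ℝ) :
    tinner X (c • Y) = c * tinner X Y := by
  simp [tinner, Matrix.mul_smul, Matrix.trace_smul, smul_eq_mul]

lemma tinner_sub_right (X Y Z : Matrix (Fin p) (Fin q) ℝ) :
    tinner X (Y - Z) = tinner X Y - tinner X Z := by
  simp [tinner, Matrix.mul_sub, Matrix.trace_sub]

lemma tinner_neg_right (X Y : Matrix (Fin p) (Fin q) ℝ) : tinner X (-Y) = - tinner X Y := by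
  simp [tinner, Matrix.mul_neg]

variable {a b c d : ℕ}

def toMat : ((Fin a) → (Fin b) → ℝ) →ₗ[ℝ] Matrix (Fin a) (Fin b) ℝ where
  toFun := Matrix.of
  map_add' _ _ := rfl
  map_smul' _ _ := rfl

def ofMat : Matrix (Fin a) (Fin b) ℝ →ₗ[ℝ] ((Fin a) → (Fin b) → ℝ) where
  toFun := Matrix.of.symm
  map_add' _ _ := rfl
  map_smul' _ _ := rfl

lemma continuous_toMat : Continuous (toMat (a := a) (b := b)) :=
  LinearMap.continuous_of_finiteDimensional _

lemma continuous_ofMat : Continuous (ofMat (a := a) (b := b)) :=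
  LinearMap.continuous_of_finiteDimensional _

lemma measurable_of_cont {φ : Matrix (Fin a) (Fin b) ℝ → Matrix (Fin c) (Fin d) ℝ}
    (hφ : Continuous φ) : Measurable φ := by
  have h : Continuous fun x : (Fin a) → (Fin b) → ℝ => ofMat (φ (toMat x)) :=
    continuous_ofMat.comp (hφ.comp continuous_toMat)
  exact h.measurable

lemma measurable_of_cont' {φ : Matrix (Fin a) (Fin b) ℝ → ℝ} (hφ : Continuous φ) :
    Measurable φ := by
  have h : Continuous fun x : (Fin a) → (Fin b) → ℝ => φ (toMat x) :=
    hφ.comp continuous_toMat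
  exact h.measurable

noncomputable def entryCLM (i : Fin a) (j : Fin b) : Matrix (Fin a) (Fin b) ℝ →L[ℝ] ℝ :=
  LinearMap.toContinuousLinearMap
    { toFun := fun A => A i j
      map_add' := fun _ _ => rfl
      map_smul' := fun _ _ => rfl }

@[simp] lemma entryCLM_apply (i : Fin a) (j : Fin b) (A : Matrix (Fin a) (Fin b) ℝ) :
    entryCLM i j A = A i j := rfl

lemma measurable_entry (i : Fin a) (j : Fin b) :
    Measurable fun A : Matrix (Fin a) (Fin b) ℝ => A i j :=
  ((measurable_pi_apply j).comp (measurable_pi_apply i))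

lemma mat_measurable_iff {α : Type*} [MeasurableSpace α] {F : α → Matrix (Fin a) (Fin b) ℝ} :
    Measurable F ↔ ∀ i j, Measurable fun ω => F ω i j :=
  measurable_pi_iff.trans (forall_congr' fun _ => measurable_pi_iff)



variable {f : Matrix (Fin p) (Fin q) ℝ → ℝ} {G : Matrix (Fin p) (Fin q) ℝ → Matrix (Fin p) (Fin q) ℝ}
  {L : ℝ}

lemma continuous_G (hlip : LipschitzGrad L G) (hL : 0 ≤ L) : Continuous G := by
  have : LipschitzWith L.toNNReal G := by
    apply LipschitzWith.of_dist_le_mul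
    intro W V
    rw [dist_eq_norm, dist_eq_norm]
    calc ‖G W - G V‖ ≤ L * ‖W - V‖ := hlip W V
      _ ≤ (L.toNNReal : ℝ) * ‖W - V‖ :=
          mul_le_mul_of_nonneg_right (Real.le_coe_toNNReal L) (norm_nonneg _)
  exact this.continuous

lemma continuous_tinner_left (D : Matrix (Fin p) (Fin q) ℝ) :
    Continuous fun A : Matrix (Fin p) (Fin q) ℝ => tinner A D := by
  have h : (fun A : Matrix (Fin p) (Fin q) ℝ => tinner A D)
      = fun A => ∑ j, ∑ i, A i j * D i j := funext fun A => tinner_eq_sum A D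
  rw [h]
  exact continuous_finset_sum _ fun j _ => continuous_finset_sum _ fun i _ =>
    ((entryCLM i j).continuous.mul continuous_const)

lemma descent (hgrad : IsGradient f G) (hlip : LipschitzGrad L G) (hL : 0 ≤ L)
    (X Y : Matrix (Fin p) (Fin q) ℝ) :
    f Y ≤ f X + tinner (G X) (Y - X) + L / 2 * ‖Y - X‖ ^ 2 := by
  set D := Y - X with hD
  have hline : ∀ s : ℝ, HasDerivAt (fun s : ℝ => f (X + s • D)) (tinner (G (X + s • D)) D) s := by
    intro s
    have h1 : HasDerivAt (fun s : ℝ => X + s • D) D s := by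
      have h := ((hasDerivAt_id s).smul_const D).const_add X
      simp only [one_smul] at h
      exact h
    have h2 := (hgrad.1 (X + s • D)).hasFDerivAt.comp_hasDerivAt s h1
    exact h2.congr_deriv (hgrad.2 _ _)
  have hcont : Continuous fun s : ℝ => tinner (G (X + s • D)) D := by
    exact (continuous_tinner_left D).comp ((continuous_G hlip hL).comp
      (continuous_const.add (continuous_id.smul continuous_const)))
  have hFTC : f (X + (1:ℝ) • D) - f (X + (0:ℝ) • D)
      = ∫ s in (0:ℝ)..1, tinner (G (X + s • D)) D :=
    (intervalIntegral.integral_eq_sub_of_hasDerivAt (fun s _ => hline s)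
      (hcont.intervalIntegrable 0 1)).symm
  have hbound : (∫ s in (0:ℝ)..1, tinner (G (X + s • D)) D)
      ≤ ∫ s in (0:ℝ)..1, (tinner (G X) D + s * (L * ‖D‖ ^ 2)) := by
    apply intervalIntegral.integral_mono_on (by norm_num) (hcont.intervalIntegrable 0 1)
      ((continuous_const.add (continuous_id'.mul continuous_const)).intervalIntegrable 0 1)
    intro s hs
    show tinner (G (X + s • D)) D ≤ tinner (G X) D + s * (L * ‖D‖ ^ 2)
    have h3 : tinner (G (X + s • D)) D - tinner (G X) D = tinner (G (X + s • D) - G X) D :=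
      (tinner_sub_left _ _ _).symm
    have h4 : tinner (G (X + s • D) - G X) D ≤ ‖G (X + s • D) - G X‖ * ‖D‖ := tinner_le _ _
    have h5 : ‖G (X + s • D) - G X‖ ≤ L * ‖s • D‖ := by simpa using hlip (X + s • D) X
    have h6 : ‖s • D‖ = s * ‖D‖ := by
      rw [norm_smul, Real.norm_eq_abs, abs_of_nonneg hs.1]
    have h7 := mul_le_mul_of_nonneg_right h5 (norm_nonneg D)
    rw [h6] at h7
    nlinarith [h7]
  have hint : (∫ s in (0:ℝ)..1, (tinner (G X) D + s * (L * ‖D‖ ^ 2)))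
      = tinner (G X) D + L / 2 * ‖D‖ ^ 2 := by
    rw [intervalIntegral.integral_add (intervalIntegrable_const)
      ((by fun_prop : Continuous fun s : ℝ => s * (L * ‖D‖ ^ 2)).intervalIntegrable 0 1),
      intervalIntegral.integral_const, intervalIntegral.integral_mul_const, integral_id]
    norm_num
    ring
  have hYX : X + (1:ℝ) • D = Y := by rw [one_smul, hD]; abel
  have hXX : X + (0:ℝ) • D = X := by rw [zero_smul, add_zero]
  rw [hYX, hXX] at hFTC
  linarith [hFTC, hbound.trans_eq hint]

lemma grad_sq_le {fstar : ℝ} (hgrad : IsGradient f G) (hlip : LipschitzGrad L G) (hL : 0 < L)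
    (hbelow : ∀ W, fstar ≤ f W) (X : Matrix (Fin p) (Fin q) ℝ) :
    ‖G X‖ ^ 2 ≤ 2 * L * (f X - fstar) := by
  have h := descent hgrad hlip hL.le X (X - (1 / L) • G X)
  have hD : X - (1 / L) • G X - X = -((1 / L) • G X) := by abel
  rw [hD] at h
  have h1 : tinner (G X) (-((1 / L) • G X)) = -(1 / L) * ‖G X‖ ^ 2 := by
    rw [tinner_neg_right, tinner_smul_right, tinner_self]; ring
  have h2 : ‖-((1 / L) • G X)‖ ^ 2 = (1 / L) ^ 2 * ‖G X‖ ^ 2 := by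
    rw [norm_neg, norm_smul, Real.norm_eq_abs, abs_of_nonneg (by positivity : (0:ℝ) ≤ 1 / L)]
    ring
  rw [h1, h2] at h
  have h3 := hbelow (X - (1 / L) • G X)
  have hLne : L ≠ 0 := ne_of_gt hL
  have heq : f X - (1 / (2 * L)) * ‖G X‖ ^ 2
      = f X + -(1 / L) * ‖G X‖ ^ 2 + L / 2 * ((1 / L) ^ 2 * ‖G X‖ ^ 2) := by
    field_simp; ring
  have h4 : 1 / (2 * L) * ‖G X‖ ^ 2 ≤ f X - fstar := by linarith
  have h5 := mul_le_mul_of_nonneg_left h4 (by positivity : (0:ℝ) ≤ 2 * L)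
  calc ‖G X‖ ^ 2 = 2 * L * (1 / (2 * L) * ‖G X‖ ^ 2) := by field_simp
    _ ≤ 2 * L * (f X - fstar) := h5

lemma proj_tinner_eq {Hm : Matrix (Fin p) (Fin p) ℝ} (hsym : Hmᵀ = Hm) (hidem : Hm * Hm = Hm)
    (A : Matrix (Fin p) (Fin q) ℝ) :
    tinner (Hm * A) (Hm * A) = tinner A (Hm * A) := by
  unfold tinner
  rw [Matrix.transpose_mul, hsym, Matrix.mul_assoc, ← Matrix.mul_assoc Hm Hm A, hidem]

lemma descent_step {γ : ℝ} (hgrad : IsGradient f G) (hlip : LipschitzGrad L G) (hL : 0 < L)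
    (hγ0 : 0 < γ) (hγ : γ ≤ 1 / L) {Hm : Matrix (Fin p) (Fin p) ℝ}
    (hsym : Hmᵀ = Hm) (hidem : Hm * Hm = Hm) (X : Matrix (Fin p) (Fin q) ℝ) :
    f (X - γ • (Hm * G X)) ≤ f X - γ / 2 * tinner (G X) (Hm * G X) := by
  have h := descent hgrad hlip hL.le X (X - γ • (Hm * G X))
  have hD : X - γ • (Hm * G X) - X = -(γ • (Hm * G X)) := by abel
  rw [hD] at h
  set Q := tinner (G X) (Hm * G X) with hQ
  have hQnn : 0 ≤ Q := by
    rw [hQ, ← proj_tinner_eq hsym hidem]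
    exact tinner_self_nonneg _
  have h1 : tinner (G X) (-(γ • (Hm * G X))) = -γ * Q := by
    rw [tinner_neg_right, tinner_smul_right]; ring
  have h2 : ‖-(γ • (Hm * G X))‖ ^ 2 = γ ^ 2 * Q := by
    rw [norm_neg, norm_smul, Real.norm_eq_abs, abs_of_nonneg hγ0.le, mul_pow,
      ← tinner_self, proj_tinner_eq hsym hidem]
  rw [h1, h2] at h
  have hLγ : L * γ ≤ 1 := by
    have := (le_div_iff₀ hL).mp hγ
    linarith
  nlinarith [mul_le_mul_of_nonneg_right (mul_le_mul_of_nonneg_right hLγ hQnn) hγ0.le]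


section Spectral
variable {k : ℕ}

lemma isHermitian_of_symm {M : Matrix (Fin k) (Fin k) ℝ} (h : Mᵀ = M) : M.IsHermitian := by
  have hct : Mᴴ = Mᵀ := by
    ext i j
    simp [Matrix.conjTranspose_apply, Matrix.transpose_apply]
  exact hct.trans h

lemma spectrum_bddBelow {M : Matrix (Fin k) (Fin k) ℝ} (hsym : Mᵀ = M) :
    BddBelow (spectrum ℝ M) := by
  rw [(isHermitian_of_symm hsym).spectrum_real_eq_range_eigenvalues]
  exact (Set.finite_range _).bddBelow

lemma quad_lower {M : Matrix (Fin k) (Fin k) ℝ} (hsym : Mᵀ = M) (x : Fin k → ℝ) :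
    sInf (spectrum ℝ M) * (x ⬝ᵥ x) ≤ x ⬝ᵥ (M *ᵥ x) := by
  rcases Nat.eq_zero_or_pos k with hk | hk
  · subst hk
    simp [dotProduct]
  have hHerm : M.IsHermitian := isHermitian_of_symm hsym
  have hbdd : BddBelow (spectrum ℝ M) := spectrum_bddBelow hsym
  set lam := sInf (spectrum ℝ M) with hlam
  set M' : Matrix (Fin k) (Fin k) ℝ := M - lam • 1 with hM'
  have hHerm' : M'.IsHermitian := isHermitian_of_symm (by
    rw [hM', Matrix.transpose_sub, hsym, Matrix.transpose_smul, Matrix.transpose_one])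
  have hspec' : spectrum ℝ M' = spectrum ℝ M - ({lam} : Set ℝ) := by
    have h := spectrum.sub_singleton_eq (a := M) (r := lam)
    rw [Algebra.algebraMap_eq_smul_one] at h
    rw [hM', ← h]
  have hpsd : M'.PosSemidef := by
    apply hHerm'.posSemidef_iff_eigenvalues_nonneg.mpr
    intro i
    have hβ : hHerm'.eigenvalues i ∈ spectrum ℝ M' := hHerm'.eigenvalues_mem_spectrum_real i
    rw [hspec'] at hβ
    obtain ⟨s, hs, r, hr, hsr⟩ := Set.mem_sub.mp hβ
    rw [Set.mem_singleton_iff] at hr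
    subst hr
    have hle : lam ≤ s := csInf_le hbdd hs
    rw [← hsr, Pi.zero_apply]
    linarith
  have h0 := hpsd.dotProduct_mulVec_nonneg x
  simp only [star_trivial] at h0
  have hexp : x ⬝ᵥ (M' *ᵥ x) = x ⬝ᵥ (M *ᵥ x) - lam * (x ⬝ᵥ x) := by
    rw [hM', Matrix.sub_mulVec, Matrix.smul_mulVec, Matrix.one_mulVec,
      dotProduct_sub, dotProduct_smul, smul_eq_mul]
  rw [hexp] at h0
  linarith

lemma quad_nonneg_projection {K : Matrix (Fin k) (Fin k) ℝ} (hsym : Kᵀ = K)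
    (hidem : K * K = K) (x : Fin k → ℝ) : 0 ≤ x ⬝ᵥ (K *ᵥ x) := by
  have h1 : x ⬝ᵥ (K *ᵥ x) = (K *ᵥ x) ⬝ᵥ (K *ᵥ x) := by
    conv_lhs => rw [← hidem, ← Matrix.mulVec_mulVec, Matrix.dotProduct_mulVec]
    congr 1
    rw [← hsym, Matrix.vecMul_transpose, hsym]
  rw [h1]
  exact Finset.sum_nonneg fun _ _ => mul_self_nonneg _

lemma lam_le_one {M : Matrix (Fin k) (Fin k) ℝ} (hsym : Mᵀ = M) (hk : 0 < k)
    (hquad : ∀ x : Fin k → ℝ, x ⬝ᵥ (M *ᵥ x) ≤ x ⬝ᵥ x) : sInf (spectrum ℝ M) ≤ 1 := by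
  have hHerm : M.IsHermitian := isHermitian_of_symm hsym
  have hbdd : BddBelow (spectrum ℝ M) := spectrum_bddBelow hsym
  set i0 : Fin k := ⟨0, hk⟩
  set s := hHerm.eigenvalues i0 with hsdef
  have hs : s ∈ spectrum ℝ M := hHerm.eigenvalues_mem_spectrum_real i0
  have h1 : sInf (spectrum ℝ M) ≤ s := csInf_le hbdd hs
  set N : Matrix (Fin k) (Fin k) ℝ := 1 - M with hN
  have hNh : N.IsHermitian := isHermitian_of_symm (by
    rw [hN, Matrix.transpose_sub, hsym, Matrix.transpose_one])
  have hNpsd : N.PosSemidef := by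
    refine .of_dotProduct_mulVec_nonneg hNh fun x => ?_
    simp only [star_trivial, hN, Matrix.sub_mulVec, Matrix.one_mulVec, dotProduct_sub]
    linarith [hquad x]
  have h1s : 1 - s ∈ spectrum ℝ N := by
    have : N = algebraMap ℝ (Matrix (Fin k) (Fin k) ℝ) 1 - M := by
      rw [hN, Algebra.algebraMap_eq_smul_one, one_smul]
    rw [this, ← spectrum.singleton_sub_eq]
    exact Set.sub_mem_sub (Set.mem_singleton 1) hs
  rw [hNh.spectrum_real_eq_range_eigenvalues] at h1s
  obtain ⟨j, hj⟩ := h1s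
  have := hNpsd.eigenvalues_nonneg j
  rw [hj] at this
  linarith

end Spectral

lemma tinner_mulvec_cols (M : Matrix (Fin p) (Fin p) ℝ) (A : Matrix (Fin p) (Fin q) ℝ) :
    tinner A (M * A) = ∑ j, (fun i => A i j) ⬝ᵥ (M *ᵥ fun i => A i j) := by
  rw [tinner_eq_sum]
  refine Finset.sum_congr rfl fun j _ => ?_
  simp [Matrix.mul_apply, Matrix.mulVec, dotProduct]

lemma norm_sq_cols (A : Matrix (Fin p) (Fin q) ℝ) :
    ‖A‖ ^ 2 = ∑ j, (fun i => A i j) ⬝ᵥ (fun i => A i j) := by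
  rw [norm_sq_eq, Finset.sum_comm]
  simp [dotProduct, sq]

lemma quad_lower_mat {M : Matrix (Fin p) (Fin p) ℝ} (hsym : Mᵀ = M)
    (A : Matrix (Fin p) (Fin q) ℝ) :
    sInf (spectrum ℝ M) * ‖A‖ ^ 2 ≤ tinner A (M * A) := by
  rw [tinner_mulvec_cols, norm_sq_cols, Finset.mul_sum]
  exact Finset.sum_le_sum fun j _ => quad_lower hsym _


lemma abs_tinner_le (X Y : Matrix (Fin p) (Fin q) ℝ) : |tinner X Y| ≤ ‖X‖ * ‖Y‖ := by
  rcases abs_cases (tinner X Y) with ⟨h, _⟩ | ⟨h, _⟩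
  · rw [h]; exact tinner_le X Y
  · rw [h]
    have : -tinner X Y = tinner X (-Y) := (tinner_neg_right X Y).symm
    rw [this]
    calc tinner X (-Y) ≤ ‖X‖ * ‖-Y‖ := tinner_le X (-Y)
      _ = ‖X‖ * ‖Y‖ := by rw [norm_neg]

section Proj
variable {k : ℕ}

lemma entries_le_one {Hm : Matrix (Fin k) (Fin k) ℝ} (hsym : Hmᵀ = Hm) (hidem : Hm * Hm = Hm)
    (i j : Fin k) : |Hm i j| ≤ 1 := by
  have hdiag : ∀ i, Hm i i = ∑ l, Hm i l ^ 2 := by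
    intro i
    conv_lhs => rw [← hidem]
    rw [Matrix.mul_apply]
    refine Finset.sum_congr rfl fun l _ => ?_
    rw [sq]
    congr 1
    exact (congrFun (congrFun hsym l) i).symm
  have h1 : Hm i j ^ 2 ≤ Hm i i := by
    rw [hdiag i]
    exact Finset.single_le_sum (f := fun l => Hm i l ^ 2) (fun _ _ => sq_nonneg _)
      (Finset.mem_univ j)
  have h2 : Hm i i ^ 2 ≤ Hm i i := by
    conv_rhs => rw [hdiag i]
    exact Finset.single_le_sum (f := fun l => Hm i l ^ 2) (fun _ _ => sq_nonneg _)
      (Finset.mem_univ i)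
  have h3 : 0 ≤ Hm i i := by
    rw [hdiag i]; exact Finset.sum_nonneg fun _ _ => sq_nonneg _
  have h4 : Hm i i ≤ 1 := by nlinarith
  have h5 : Hm i j ^ 2 ≤ 1 := by linarith
  calc |Hm i j| = Real.sqrt (Hm i j ^ 2) := (Real.sqrt_sq_eq_abs _).symm
    _ ≤ Real.sqrt 1 := Real.sqrt_le_sqrt h5
    _ = 1 := Real.sqrt_one

lemma proj_norm_le {Hm : Matrix (Fin k) (Fin k) ℝ} (hsym : Hmᵀ = Hm) (hidem : Hm * Hm = Hm) :
    ‖Hm‖ ≤ (k : ℝ) := by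
  rw [norm_eq_sqrt]
  calc Real.sqrt (∑ i, ∑ j, Hm i j ^ 2) ≤ Real.sqrt (∑ _i : Fin k, ∑ _j : Fin k, 1) := by
        apply Real.sqrt_le_sqrt
        refine Finset.sum_le_sum fun i _ => Finset.sum_le_sum fun j _ => ?_
        have := entries_le_one hsym hidem i j
        nlinarith [abs_nonneg (Hm i j), sq_abs (Hm i j)]
    _ = Real.sqrt ((k : ℝ) ^ 2) := by simp [sq]
    _ = (k : ℝ) := Real.sqrt_sq (Nat.cast_nonneg k)

lemma proj_compl_quad_le {Hm : Matrix (Fin k) (Fin k) ℝ} (hsym : Hmᵀ = Hm)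
    (hidem : Hm * Hm = Hm) (x : Fin k → ℝ) : x ⬝ᵥ (Hm *ᵥ x) ≤ x ⬝ᵥ x := by
  have hsym' : (1 - Hm)ᵀ = 1 - Hm := by rw [Matrix.transpose_sub, hsym, Matrix.transpose_one]
  have hidem' : (1 - Hm) * (1 - Hm) = 1 - Hm := by
    rw [Matrix.sub_mul, Matrix.mul_sub, Matrix.mul_sub, hidem]
    simp only [Matrix.one_mul, Matrix.mul_one]
    abel
  have h := quad_nonneg_projection hsym' hidem' x
  rw [Matrix.sub_mulVec, Matrix.one_mulVec, dotProduct_sub] at h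
  linarith

lemma spectrum_fin_zero {M : Matrix (Fin 0) (Fin 0) ℝ} : spectrum ℝ M = ∅ := by
  ext r
  simp only [Set.mem_empty_iff_false, iff_false, spectrum.mem_iff, not_not]
  exact isUnit_of_subsingleton _

end Proj

lemma G_growth {G : Matrix (Fin p) (Fin q) ℝ → Matrix (Fin p) (Fin q) ℝ} {L : ℝ}
    (hlip : LipschitzGrad L G) (X : Matrix (Fin p) (Fin q) ℝ) :
    ‖G X‖ ≤ ‖G 0‖ + L * ‖X‖ := by
  have h1 : ‖G X‖ - ‖G 0‖ ≤ ‖G X - G 0‖ := norm_sub_norm_le _ _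
  have h2 := hlip X 0
  rw [sub_zero] at h2
  linarith

lemma tinner_mul_expand (N : Matrix (Fin p) (Fin p) ℝ) (A : Matrix (Fin p) (Fin q) ℝ) :
    tinner A (N * A) = ∑ i, ∑ l, N i l * (A * Aᵀ) i l := by
  rw [tinner_eq_sum]
  simp only [Matrix.mul_apply, Matrix.transpose_apply, Finset.mul_sum]
  rw [Finset.sum_comm]
  refine Finset.sum_congr rfl fun i _ => ?_
  rw [Finset.sum_comm]
  exact Finset.sum_congr rfl fun l _ => Finset.sum_congr rfl fun j _ => by ring

lemma abs_gram_entry_le (A : Matrix (Fin p) (Fin q) ℝ) (i l : Fin p) :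
    |(A * Aᵀ) i l| ≤ ‖A‖ ^ 2 := by
  calc |(A * Aᵀ) i l| ≤ ‖A * Aᵀ‖ := abs_entry_le _ i l
    _ ≤ ‖A‖ * ‖Aᵀ‖ := Matrix.frobenius_norm_mul A Aᵀ
    _ = ‖A‖ ^ 2 := by rw [Matrix.frobenius_norm_transpose, sq]

section Meas
variable {α : Type*} [MeasurableSpace α]

lemma measurable_matmul {F : α → Matrix (Fin a) (Fin b) ℝ} {K : α → Matrix (Fin b) (Fin c) ℝ}
    (hF : Measurable F) (hK : Measurable K) : Measurable fun ω => F ω * K ω := by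
  rw [mat_measurable_iff]
  intro i j
  have h : (fun ω => (F ω * K ω) i j) = fun ω => ∑ l, F ω i l * K ω l j :=
    funext fun ω => Matrix.mul_apply
  rw [h]
  exact Finset.measurable_sum _ fun l _ =>
    ((mat_measurable_iff.mp hF i l).mul (mat_measurable_iff.mp hK l j))

lemma measurable_matsub {F K : α → Matrix (Fin a) (Fin b) ℝ}
    (hF : Measurable F) (hK : Measurable K) : Measurable fun ω => F ω - K ω := by
  rw [mat_measurable_iff]
  intro i j
  have h : (fun ω => (F ω - K ω) i j) = fun ω => F ω i j - K ω i j := rfl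
  rw [h]
  exact (mat_measurable_iff.mp hF i j).sub (mat_measurable_iff.mp hK i j)

lemma measurable_matsmul {F : α → Matrix (Fin a) (Fin b) ℝ} (c : ℝ)
    (hF : Measurable F) : Measurable fun ω => c • F ω := by
  rw [mat_measurable_iff]
  intro i j
  have h : (fun ω => (c • F ω) i j) = fun ω => c * F ω i j := rfl
  rw [h]
  exact (mat_measurable_iff.mp hF i j).const_mul c

lemma measurable_tinner {F K : α → Matrix (Fin a) (Fin b) ℝ}
    (hF : Measurable F) (hK : Measurable K) : Measurable fun ω => tinner (F ω) (K ω) := by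
  have h : (fun ω => tinner (F ω) (K ω)) = fun ω => ∑ j, ∑ i, F ω i j * K ω i j :=
    funext fun ω => tinner_eq_sum _ _
  rw [h]
  exact Finset.measurable_sum _ fun j _ => Finset.measurable_sum _ fun i _ =>
    (mat_measurable_iff.mp hF i j).mul (mat_measurable_iff.mp hK i j)

end Meas

noncomputable def quadCLM (x : Fin a → ℝ) : Matrix (Fin a) (Fin a) ℝ →L[ℝ] ℝ :=
  LinearMap.toContinuousLinearMap
    { toFun := fun A => x ⬝ᵥ (A *ᵥ x)
      map_add' := fun A B => by
        simp only [Matrix.add_mulVec, dotProduct_add]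
      map_smul' := fun c A => by
        simp only [Matrix.smul_mulVec, dotProduct_smul, smul_eq_mul,
          RingHom.id_apply] }

@[simp] lemma quadCLM_apply (x : Fin a → ℝ) (A : Matrix (Fin a) (Fin a) ℝ) :
    quadCLM x A = x ⬝ᵥ (A *ᵥ x) := rfl

end RacAux

set_option maxHeartbeats 1000000 in
/-- Theorem 2: RAC-LoRA with GD updates under the Polyak–Łojasiewicz condition:
linear convergence of the expected function gap. -/
theorem stmt8 {p q : ℕ} {Ω : Type*} [MeasurableSpace Ω] (μ : Measure Ω) [IsProbabilityMeasure μ]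
    (f : Matrix (Fin p) (Fin q) ℝ → ℝ) (G : Matrix (Fin p) (Fin q) ℝ → Matrix (Fin p) (Fin q) ℝ)
    (L fstar : ℝ) (hL : 0 < L) (hgrad : IsGradient f G) (hlip : LipschitzGrad L G)
    (hbelow : ∀ W, fstar ≤ f W)
    (μPL : ℝ) (hμPL : 0 < μPL) (hPL : ∀ W, μPL * (f W - fstar) ≤ (1 / 2) * ‖G W‖ ^ 2)
    (H : ℕ → Ω → Matrix (Fin p) (Fin p) ℝ)
    (hmeas : ∀ t, Measurable (H t)) (hInt : ∀ t, @Integrable _ _ SeminormedAddGroup.toContinuousENorm _ _ (H t) μ)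
    (hproj : ∀ t, ∀ᵐ ω ∂μ, (H t ω)ᵀ = H t ω ∧ H t ω * H t ω = H t ω)
    (hindep : iIndepFun (m := fun _ => matrixMeasurableSpace) H μ)
    (hid : ∀ s t, IdentDistrib (H s) (H t) μ μ)
    (lam : ℝ) (hlamdef : ∀ t, lamMin (∫ ω, H t ω ∂μ) = lam) (hlam : 0 < lam)
    (γ : ℝ) (hγ0 : 0 < γ) (hγ : γ ≤ 1 / L)
    (W : ℕ → Ω → Matrix (Fin p) (Fin q) ℝ) (W0 : Matrix (Fin p) (Fin q) ℝ)
    (hW0 : ∀ ω, W 0 ω = W0)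
    (hrec : ∀ t ω, W (t + 1) ω = W t ω - γ • (H t ω * G (W t ω)))
    (T : ℕ) :
    (∫ ω, f (W T ω) ∂μ) - fstar ≤ (1 - γ * μPL * lam) ^ T * (f W0 - fstar) := by
  classical
  have hGmeas : Measurable G := RacAux.measurable_of_cont (RacAux.continuous_G hlip hL.le)
  have hfmeas : Measurable f := RacAux.measurable_of_cont' hgrad.1.continuous
  have hWrep : ∀ t, ∃ φ : ((i : (Finset.range t : Finset ℕ)) → Matrix (Fin p) (Fin p) ℝ) →
      Matrix (Fin p) (Fin q) ℝ, Measurable φ ∧ ∀ ω, W t ω = φ fun i => H i ω := by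
    intro t
    induction t with
    | zero => exact ⟨fun _ => W0, measurable_const, fun ω => hW0 ω⟩
    | succ t ih =>
      obtain ⟨φ, hφ, hφW⟩ := ih
      have hsub : ∀ i : (Finset.range t : Finset ℕ), (i : ℕ) ∈ Finset.range (t + 1) := by
        intro i
        have := Finset.mem_range.mp i.2
        exact Finset.mem_range.mpr (by omega)
      have htmem : t ∈ Finset.range (t + 1) := Finset.self_mem_range_succ t
      set r : ((i : (Finset.range (t+1) : Finset ℕ)) → Matrix (Fin p) (Fin p) ℝ) →
          ((i : (Finset.range t : Finset ℕ)) → Matrix (Fin p) (Fin p) ℝ) :=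
        fun v i => v ⟨i, hsub i⟩ with hr
      have hrmeas : Measurable r :=
        measurable_pi_iff.mpr fun i => measurable_pi_apply _
      refine ⟨fun v => φ (r v) - γ • (v ⟨t, htmem⟩ * G (φ (r v))), ?_, ?_⟩
      · exact RacAux.measurable_matsub (hφ.comp hrmeas)
          (RacAux.measurable_matsmul γ (RacAux.measurable_matmul (measurable_pi_apply _)
            (hGmeas.comp (hφ.comp hrmeas))))
      · intro ω
        rw [hrec t ω, hφW ω]
  have hWmeas : ∀ t, Measurable (W t) := by
    intro t
    obtain ⟨φ, hφ, hφW⟩ := hWrep t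
    have : W t = fun ω => φ fun i => H i ω := funext hφW
    rw [this]
    exact hφ.comp (measurable_pi_iff.mpr fun i => hmeas i)
  have hindepWH : ∀ t, IndepFun (W t) (H t) μ := by
    intro t
    obtain ⟨φ, hφ, hφW⟩ := hWrep t
    have hdisj : Disjoint (Finset.range t) ({t} : Finset ℕ) := by
      simp [Finset.disjoint_singleton_right]
    have base := hindep.indepFun_finset (Finset.range t) {t} hdisj hmeas
    have htm : t ∈ ({t} : Finset ℕ) := Finset.mem_singleton_self t
    have key := base.comp hφ (measurable_pi_apply (⟨t, htm⟩ : (({t} : Finset ℕ) : Finset ℕ)))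
    have hWt : W t = fun ω => φ fun i => H i ω := funext hφW
    rw [hWt]
    exact key
  -- deterministic bounds
  set C : ℕ → ℝ := fun t => Nat.rec ‖W0‖ (fun _ c => c + γ * ((p : ℝ) * (‖G 0‖ + L * c))) t
    with hC
  have hC0 : C 0 = ‖W0‖ := rfl
  have hCsucc : ∀ t, C (t + 1) = C t + γ * ((p : ℝ) * (‖G 0‖ + L * C t)) := fun t => rfl
  have hCnn : ∀ t, 0 ≤ C t := by
    intro t
    induction t with
    | zero => rw [hC0]; exact norm_nonneg _
    | succ t ih =>
      rw [hCsucc]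
      have h1 : 0 ≤ ‖G 0‖ + L * C t := add_nonneg (norm_nonneg _) (mul_nonneg hL.le ih)
      have h2 : 0 ≤ γ * ((p : ℝ) * (‖G 0‖ + L * C t)) :=
        mul_nonneg hγ0.le (mul_nonneg (Nat.cast_nonneg p) h1)
      linarith
  have hWbd : ∀ t, ∀ᵐ ω ∂μ, ‖W t ω‖ ≤ C t := by
    intro t
    induction t with
    | zero =>
      filter_upwards with ω
      rw [hW0 ω, hC0]
    | succ t ih =>
      filter_upwards [ih, hproj t] with ω h1 h2
      rw [hrec t ω, hCsucc t]
      have hHn : ‖H t ω‖ ≤ (p : ℝ) := RacAux.proj_norm_le h2.1 h2.2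
      have hGn : ‖G (W t ω)‖ ≤ ‖G 0‖ + L * C t := by
        have := RacAux.G_growth hlip (W t ω)
        nlinarith [hL.le]
      calc ‖W t ω - γ • (H t ω * G (W t ω))‖
          ≤ ‖W t ω‖ + ‖γ • (H t ω * G (W t ω))‖ := norm_sub_le _ _
        _ = ‖W t ω‖ + γ * ‖H t ω * G (W t ω)‖ := by
            rw [norm_smul, Real.norm_eq_abs, abs_of_nonneg hγ0.le]
        _ ≤ C t + γ * ((p : ℝ) * (‖G 0‖ + L * C t)) := by
            have hm : ‖H t ω * G (W t ω)‖ ≤ (p : ℝ) * (‖G 0‖ + L * C t) :=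
              (Matrix.frobenius_norm_mul _ _).trans
                (mul_le_mul hHn hGn (norm_nonneg _) (Nat.cast_nonneg p))
            have := mul_le_mul_of_nonneg_left hm hγ0.le
            linarith
  set GB : ℕ → ℝ := fun t => ‖G 0‖ + L * C t with hGBdef
  have hGBnn : ∀ t, 0 ≤ GB t := fun t => add_nonneg (norm_nonneg _) (mul_nonneg hL.le (hCnn t))
  have hGWbd : ∀ t, ∀ᵐ ω ∂μ, ‖G (W t ω)‖ ≤ GB t := by
    intro t
    filter_upwards [hWbd t] with ω h1
    show ‖G (W t ω)‖ ≤ ‖G 0‖ + L * C t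
    have := RacAux.G_growth hlip (W t ω)
    nlinarith [hL.le]
  set B : ℕ → ℝ := fun t => max |fstar| (|f 0| + ‖G 0‖ * C t + L / 2 * C t ^ 2) with hB
  have hfub : ∀ X : Matrix (Fin p) (Fin q) ℝ, f X ≤ f 0 + ‖G 0‖ * ‖X‖ + L / 2 * ‖X‖ ^ 2 := by
    intro X
    have h := RacAux.descent hgrad hlip hL.le 0 X
    rw [sub_zero] at h
    have h2 : tinner (G 0) X ≤ ‖G 0‖ * ‖X‖ := RacAux.tinner_le _ _
    linarith
  have hfbd : ∀ t, ∀ᵐ ω ∂μ, ‖f (W t ω)‖ ≤ B t := by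
    intro t
    filter_upwards [hWbd t] with ω h1
    rw [Real.norm_eq_abs, abs_le]
    constructor
    · have h2 := hbelow (W t ω)
      have h3 : -(B t) ≤ -|fstar| := by
        simp only [neg_le_neg_iff, hB]
        exact le_max_left _ _
      have h4 : -|fstar| ≤ fstar := neg_abs_le fstar
      linarith
    · have h2 := hfub (W t ω)
      have h5 : ‖W t ω‖ ^ 2 ≤ C t ^ 2 := by nlinarith [norm_nonneg (W t ω)]
      have h6 : f (W t ω) ≤ |f 0| + ‖G 0‖ * C t + L / 2 * C t ^ 2 := by
        have h7 : ‖G 0‖ * ‖W t ω‖ ≤ ‖G 0‖ * C t :=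
          mul_le_mul_of_nonneg_left h1 (norm_nonneg _)
        have h8 : L / 2 * ‖W t ω‖ ^ 2 ≤ L / 2 * C t ^ 2 :=
          mul_le_mul_of_nonneg_left h5 (by positivity)
        have h9 : f 0 ≤ |f 0| := le_abs_self _
        linarith
      exact h6.trans (le_max_right _ _)
  have hfInt : ∀ t, Integrable (fun ω => f (W t ω)) μ := by
    intro t
    exact Integrable.mono' (integrable_const (B t))
      ((hfmeas.comp (hWmeas t)).aestronglyMeasurable) (hfbd t)
  set Q : ℕ → Ω → ℝ := fun t ω => tinner (G (W t ω)) (H t ω * G (W t ω)) with hQdef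
  have hQmeas : ∀ t, Measurable (Q t) := fun t =>
    RacAux.measurable_tinner (hGmeas.comp (hWmeas t))
      (RacAux.measurable_matmul (hmeas t) (hGmeas.comp (hWmeas t)))
  have hQbd : ∀ t, ∀ᵐ ω ∂μ, ‖Q t ω‖ ≤ (p : ℝ) * GB t ^ 2 := by
    intro t
    filter_upwards [hGWbd t, hproj t] with ω h1 h2
    rw [Real.norm_eq_abs]
    calc |Q t ω| ≤ ‖G (W t ω)‖ * ‖H t ω * G (W t ω)‖ := RacAux.abs_tinner_le _ _
      _ ≤ GB t * ((p : ℝ) * GB t) := by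
          have hHn : ‖H t ω‖ ≤ (p : ℝ) := RacAux.proj_norm_le h2.1 h2.2
          have hmn : ‖H t ω * G (W t ω)‖ ≤ (p : ℝ) * GB t :=
            (Matrix.frobenius_norm_mul _ _).trans
              (mul_le_mul hHn h1 (norm_nonneg _) (Nat.cast_nonneg p))
          exact mul_le_mul h1 hmn (norm_nonneg _) (hGBnn t)
      _ = (p : ℝ) * GB t ^ 2 := by ring
  have hQint : ∀ t, Integrable (Q t) μ := fun t =>
    Integrable.mono' (integrable_const _) ((hQmeas t).aestronglyMeasurable) (hQbd t)
  have hstep1 : ∀ t, (∫ ω, f (W (t + 1) ω) ∂μ)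
      ≤ (∫ ω, f (W t ω) ∂μ) - γ / 2 * ∫ ω, Q t ω ∂μ := by
    intro t
    have hae : ∀ᵐ ω ∂μ, f (W (t + 1) ω) ≤ f (W t ω) - γ / 2 * Q t ω := by
      filter_upwards [hproj t] with ω h2
      rw [hrec t ω]
      exact RacAux.descent_step hgrad hlip hL hγ0 hγ h2.1 h2.2 (W t ω)
    have hint2 : Integrable (fun ω => f (W t ω) - γ / 2 * Q t ω) μ :=
      (hfInt t).sub ((hQint t).const_mul (γ / 2))
    have h := integral_mono_ae (hfInt (t + 1)) hint2 hae
    rwa [integral_sub (hfInt t) ((hQint t).const_mul (γ / 2)), integral_const_mul] at h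
  have hMm : ∀ t (i l : Fin p), (∫ ω, H t ω ∂μ) i l = ∫ ω, H t ω i l ∂μ := by
    intro t i l
    exact ((RacAux.entryCLM i l).integral_comp_comm (hInt t)).symm
  have hMsym : ∀ t, (∫ ω, H t ω ∂μ)ᵀ = ∫ ω, H t ω ∂μ := by
    intro t
    refine Matrix.ext fun i l => ?_
    rw [Matrix.transpose_apply, hMm t l i, hMm t i l]
    refine integral_congr_ae ((hproj t).mono fun ω h => ?_)
    calc H t ω l i = (H t ω)ᵀ i l := (Matrix.transpose_apply _ i l).symm
      _ = H t ω i l := congrFun (congrFun h.1 i) l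
  have hquadup : ∀ t (x : Fin p → ℝ), x ⬝ᵥ ((∫ ω, H t ω ∂μ) *ᵥ x) ≤ x ⬝ᵥ x := by
    intro t x
    have hint : (∫ ω, x ⬝ᵥ (H t ω *ᵥ x) ∂μ) = x ⬝ᵥ ((∫ ω, H t ω ∂μ) *ᵥ x) := by
      exact (RacAux.quadCLM x).integral_comp_comm (hInt t)
    rw [← hint]
    have hb : ∀ᵐ ω ∂μ, x ⬝ᵥ (H t ω *ᵥ x) ≤ x ⬝ᵥ x :=
      (hproj t).mono fun ω h => RacAux.proj_compl_quad_le h.1 h.2 x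
    calc (∫ ω, x ⬝ᵥ (H t ω *ᵥ x) ∂μ) ≤ ∫ _ω, x ⬝ᵥ x ∂μ :=
        integral_mono_ae ((RacAux.quadCLM x).integrable_comp (hInt t)) (integrable_const _) hb
      _ = x ⬝ᵥ x := by simp
  have hp : 0 < p := by
    rcases Nat.eq_zero_or_pos p with hp0 | hp0
    · exfalso
      subst hp0
      have h2 : sInf (spectrum ℝ (∫ ω, H 0 ω ∂μ)) = lam := hlamdef 0
      rw [RacAux.spectrum_fin_zero, Real.sInf_empty] at h2
      linarith
    · exact hp0
  have hlam1 : lam ≤ 1 := by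
    have h2 : sInf (spectrum ℝ (∫ ω, H 0 ω ∂μ)) = lam := hlamdef 0
    rw [← h2]
    exact RacAux.lam_le_one (hMsym 0) hp (hquadup 0)
  have hlamlow : ∀ t (A : Matrix (Fin p) (Fin q) ℝ),
      lam * ‖A‖ ^ 2 ≤ tinner A ((∫ ω, H t ω ∂μ) * A) := by
    intro t A
    have h2 : sInf (spectrum ℝ (∫ ω, H t ω ∂μ)) = lam := hlamdef t
    rw [← h2]
    exact RacAux.quad_lower_mat (hMsym t) A
  have hEQ : ∀ t, (∫ ω, Q t ω ∂μ)
      = ∫ ω, tinner (G (W t ω)) ((∫ ω', H t ω' ∂μ) * G (W t ω)) ∂μ := by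
    intro t
    have htransmeas : Measurable fun X : Matrix (Fin p) (Fin q) ℝ => (G X)ᵀ :=
      RacAux.mat_measurable_iff.mpr fun i j => RacAux.mat_measurable_iff.mp hGmeas j i
    have humeas : Measurable fun X : Matrix (Fin p) (Fin q) ℝ => G X * (G X)ᵀ :=
      RacAux.measurable_matmul hGmeas htransmeas
    have hSmeas : ∀ i l : Fin p, Measurable fun ω => (G (W t ω) * (G (W t ω))ᵀ) i l := fun i l =>
      (RacAux.mat_measurable_iff.mp humeas i l).comp (hWmeas t)
    have hSbd : ∀ i l : Fin p, ∀ᵐ ω ∂μ, ‖(G (W t ω) * (G (W t ω))ᵀ) i l‖ ≤ GB t ^ 2 := by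
      intro i l
      filter_upwards [hGWbd t] with ω h1
      rw [Real.norm_eq_abs]
      calc |(G (W t ω) * (G (W t ω))ᵀ) i l| ≤ ‖G (W t ω)‖ ^ 2 := RacAux.abs_gram_entry_le _ i l
        _ ≤ GB t ^ 2 := by nlinarith [norm_nonneg (G (W t ω)), hGBnn t]
    have hSint : ∀ i l : Fin p, Integrable (fun ω => (G (W t ω) * (G (W t ω))ᵀ) i l) μ :=
      fun i l => Integrable.mono' (integrable_const _)
        ((hSmeas i l).aestronglyMeasurable) (hSbd i l)
    have hHint : ∀ i l : Fin p, Integrable (fun ω => H t ω i l) μ := fun i l => by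
      exact (RacAux.entryCLM i l).integrable_comp (hInt t)
    have hHbd1 : ∀ i l : Fin p, ∀ᵐ ω ∂μ, ‖H t ω i l‖ ≤ 1 := by
      intro i l
      filter_upwards [hproj t] with ω h2
      rw [Real.norm_eq_abs]
      exact RacAux.entries_le_one h2.1 h2.2 i l
    have hPint : ∀ i l : Fin p,
        Integrable (fun ω => H t ω i l * (G (W t ω) * (G (W t ω))ᵀ) i l) μ := by
      intro i l
      refine Integrable.mono' (integrable_const (1 * GB t ^ 2))
        (((RacAux.mat_measurable_iff.mp (hmeas t) i l).mul (hSmeas i l)).aestronglyMeasurable) ?_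
      filter_upwards [hHbd1 i l, hSbd i l] with ω h1 h2
      rw [Real.norm_eq_abs, abs_mul]
      rw [Real.norm_eq_abs] at h1 h2
      exact mul_le_mul h1 h2 (abs_nonneg _) zero_le_one
    have hprod : ∀ i l : Fin p, (∫ ω, H t ω i l * (G (W t ω) * (G (W t ω))ᵀ) i l ∂μ)
        = (∫ ω, H t ω i l ∂μ) * ∫ ω, (G (W t ω) * (G (W t ω))ᵀ) i l ∂μ := by
      intro i l
      have hi2 : IndepFun (fun ω => H t ω i l)
          (fun ω => (G (W t ω) * (G (W t ω))ᵀ) i l) μ :=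
        (hindepWH t).symm.comp (RacAux.measurable_entry i l)
          (RacAux.mat_measurable_iff.mp humeas i l)
      exact hi2.integral_fun_mul_eq_mul_integral (hHint i l).aestronglyMeasurable (hSint i l).aestronglyMeasurable
    calc (∫ ω, Q t ω ∂μ)
        = ∫ ω, ∑ i, ∑ l, H t ω i l * (G (W t ω) * (G (W t ω))ᵀ) i l ∂μ :=
          integral_congr_ae (Filter.Eventually.of_forall fun ω =>
            RacAux.tinner_mul_expand _ _)
      _ = ∑ i, ∑ l, ∫ ω, H t ω i l * (G (W t ω) * (G (W t ω))ᵀ) i l ∂μ := by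
          rw [integral_finset_sum _ fun i _ => integrable_finset_sum _ fun l _ => hPint i l]
          exact Finset.sum_congr rfl fun i _ => integral_finset_sum _ fun l _ => hPint i l
      _ = ∑ i, ∑ l, (∫ ω', H t ω' ∂μ) i l * ∫ ω, (G (W t ω) * (G (W t ω))ᵀ) i l ∂μ := by
          refine Finset.sum_congr rfl fun i _ => Finset.sum_congr rfl fun l _ => ?_
          rw [hprod i l, hMm t i l]
      _ = ∑ i, ∑ l, ∫ ω, (∫ ω', H t ω' ∂μ) i l * (G (W t ω) * (G (W t ω))ᵀ) i l ∂μ := by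
          refine Finset.sum_congr rfl fun i _ => Finset.sum_congr rfl fun l _ => ?_
          rw [integral_const_mul]
      _ = ∫ ω, ∑ i, ∑ l, (∫ ω', H t ω' ∂μ) i l * (G (W t ω) * (G (W t ω))ᵀ) i l ∂μ := by
          refine Eq.trans ?_ (integral_finset_sum _ fun i _ => integrable_finset_sum _ fun l _ =>
            (hSint i l).const_mul _).symm
          exact Finset.sum_congr rfl fun i _ =>
            (integral_finset_sum _ fun l _ => (hSint i l).const_mul _).symm
      _ = ∫ ω, tinner (G (W t ω)) ((∫ ω', H t ω' ∂μ) * G (W t ω)) ∂μ :=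
          integral_congr_ae (Filter.Eventually.of_forall fun ω =>
            (RacAux.tinner_mul_expand _ _).symm)
  have hEQge : ∀ t, 2 * μPL * lam * ((∫ ω, f (W t ω) ∂μ) - fstar) ≤ ∫ ω, Q t ω ∂μ := by
    intro t
    rw [hEQ t]
    have hpt : ∀ ω, 2 * μPL * lam * (f (W t ω) - fstar)
        ≤ tinner (G (W t ω)) ((∫ ω', H t ω' ∂μ) * G (W t ω)) := by
      intro ω
      have h1 := hPL (W t ω)
      have h1' : 2 * μPL * (f (W t ω) - fstar) ≤ ‖G (W t ω)‖ ^ 2 := by linarith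
      have h3 := mul_le_mul_of_nonneg_left h1' hlam.le
      have h2 := hlamlow t (G (W t ω))
      nlinarith [h2, h3]
    have htmeas : Measurable fun ω => tinner (G (W t ω)) ((∫ ω', H t ω' ∂μ) * G (W t ω)) :=
      RacAux.measurable_tinner (hGmeas.comp (hWmeas t))
        (RacAux.measurable_matmul measurable_const (hGmeas.comp (hWmeas t)))
    have htbd : ∀ᵐ ω ∂μ, ‖tinner (G (W t ω)) ((∫ ω', H t ω' ∂μ) * G (W t ω))‖
        ≤ GB t * (‖∫ ω', H t ω' ∂μ‖ * GB t) := by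
      filter_upwards [hGWbd t] with ω h1
      rw [Real.norm_eq_abs]
      calc |tinner (G (W t ω)) ((∫ ω', H t ω' ∂μ) * G (W t ω))|
          ≤ ‖G (W t ω)‖ * ‖(∫ ω', H t ω' ∂μ) * G (W t ω)‖ := RacAux.abs_tinner_le _ _
        _ ≤ GB t * (‖∫ ω', H t ω' ∂μ‖ * GB t) := by
            have hmn : ‖(∫ ω', H t ω' ∂μ) * G (W t ω)‖ ≤ ‖∫ ω', H t ω' ∂μ‖ * GB t :=
              (Matrix.frobenius_norm_mul _ _).trans
                (mul_le_mul_of_nonneg_left h1 (norm_nonneg _))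
            exact mul_le_mul h1 hmn (norm_nonneg _) (hGBnn t)
    have htint : Integrable
        (fun ω => tinner (G (W t ω)) ((∫ ω', H t ω' ∂μ) * G (W t ω))) μ :=
      Integrable.mono' (integrable_const _) (htmeas.aestronglyMeasurable) htbd
    have hmono := integral_mono_ae
      (((hfInt t).sub (integrable_const fstar)).const_mul (2 * μPL * lam)) htint
      (Filter.Eventually.of_forall hpt)
    calc 2 * μPL * lam * ((∫ ω, f (W t ω) ∂μ) - fstar)
        = ∫ ω, 2 * μPL * lam * (f (W t ω) - fstar) ∂μ := by
          rw [integral_const_mul, integral_sub (hfInt t) (integrable_const fstar)]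
          simp
      _ ≤ _ := hmono
  have hstep : ∀ t, (∫ ω, f (W (t + 1) ω) ∂μ) - fstar
      ≤ (1 - γ * μPL * lam) * ((∫ ω, f (W t ω) ∂μ) - fstar) := by
    intro t
    have h1 := hstep1 t
    have h2 := hEQge t
    have h3 := mul_le_mul_of_nonneg_left h2 (by positivity : (0:ℝ) ≤ γ / 2)
    nlinarith [h1, h3]
  have hE0 : (∫ ω, f (W 0 ω) ∂μ) = f W0 := by
    simp [hW0]
  rcases eq_or_lt_of_le (hbelow W0) with hcase | hcase
  · have hG0 : G W0 = 0 := by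
      have h := RacAux.grad_sq_le hgrad hlip hL hbelow W0
      rw [← hcase] at h
      have h2 : ‖G W0‖ ^ 2 ≤ 0 := by linarith
      have hn : ‖G W0‖ = 0 := by nlinarith [norm_nonneg (G W0)]
      exact norm_eq_zero.mp hn
    have hconst : ∀ t ω, W t ω = W0 := by
      intro t
      induction t with
      | zero => exact hW0
      | succ t ih =>
        intro ω
        rw [hrec t ω, ih ω, hG0, Matrix.mul_zero, smul_zero, sub_zero]
    have hWT : (fun ω => f (W T ω)) = fun _ => f W0 := funext fun ω => by rw [hconst T ω]
    rw [hWT]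
    simp [← hcase]
  · have hμL : μPL ≤ L := by
      have h1 := hPL W0
      have h2 := RacAux.grad_sq_le hgrad hlip hL hbelow W0
      nlinarith [hcase]
    have hc0 : 0 ≤ 1 - γ * μPL * lam := by
      have h1 : γ * μPL ≤ (1 / L) * L :=
        mul_le_mul hγ hμL hμPL.le (by positivity)
      have h1' : γ * μPL ≤ 1 := by
        rwa [one_div_mul_cancel (ne_of_gt hL)] at h1
      have h2 : γ * μPL * lam ≤ 1 * 1 :=
        mul_le_mul h1' hlam1 hlam.le zero_le_one
      linarith
    induction T with
    | zero =>
      rw [hE0, pow_zero, one_mul]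
    | succ T ih =>
      calc (∫ ω, f (W (T + 1) ω) ∂μ) - fstar
          ≤ (1 - γ * μPL * lam) * ((∫ ω, f (W T ω) ∂μ) - fstar) := hstep T
        _ ≤ (1 - γ * μPL * lam) * ((1 - γ * μPL * lam) ^ T * (f W0 - fstar)) :=
            mul_le_mul_of_nonneg_left ih hc0
        _ = (1 - γ * μPL * lam) ^ (T + 1) * (f W0 - fstar) := by ring
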